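/- arXiv:1707.06373 — 4 statements merged into one kernel-verified Lean document; each statement's English description precedes it below -/
import Mathlib

section
/- For every z ∈ 𝔻, (1/(2π)) ∫₀^{2π} F₀(z e^{−iθ}) dθ = 1. -/
open MeasureTheory Complex Metric

/-- The Wirtinger derivative `∂p/∂z = (p_x - i p_y)/2` of a function `p : ℂ → ℂ`. -/
noncomputable def wderiv (p : ℂ → ℂ) (z : ℂ) : ℂ :=
  (fderiv ℝ p z 1 - Complex.I * fderiv ℝ p z Complex.I) / 2

/-- The Wirtinger derivative `∂p/∂z̄ = (p_x + i p_y)/2` of a function `p : ℂ → ℂ`. -/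
noncomputable def wderivBar (p : ℂ → ℂ) (z : ℂ) : ℂ :=
  (fderiv ℝ p z 1 + Complex.I * fderiv ℝ p z Complex.I) / 2

/-- The normalized area measure `dA = (1/π) dx dy` on the unit disk. -/
noncomputable def dA : Measure ℂ :=
  ENNReal.ofReal (1 / Real.pi) • volume.restrict (ball (0 : ℂ) 1)

/-- The biharmonic Green function of the unit disk. -/
noncomputable def Gker (z ζ : ℂ) : ℝ :=
  ‖z - ζ‖ ^ 2 * Real.log (‖(1 - (starRingEnd ℂ) ζ * z) / (z - ζ)‖ ^ 2)
    - (1 - ‖z‖ ^ 2) * (1 - ‖ζ‖ ^ 2)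

/-- The Wirtinger derivative of the biharmonic Green function in its first variable. -/
noncomputable def Gz (z ζ : ℂ) : ℂ :=
  ((starRingEnd ℂ) z - (starRingEnd ℂ) ζ) *
      ((Real.log (‖(z - ζ) / (1 - (starRingEnd ℂ) ζ * z)‖ ^ 2) : ℝ) : ℂ)
    + ((starRingEnd ℂ) z - (starRingEnd ℂ) ζ) * ((1 - ‖ζ‖ ^ 2 : ℝ) : ℂ) /
        (1 - (starRingEnd ℂ) ζ * z)
    - (starRingEnd ℂ) z * ((1 - ‖ζ‖ ^ 2 : ℝ) : ℂ)

/-- The kernel `H₀(z) = (1/2)(1-|z|²)²/|1-z|²`. -/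
noncomputable def H0 (z : ℂ) : ℝ :=
  (1 - ‖z‖ ^ 2) ^ 2 / (2 * ‖1 - z‖ ^ 2)

/-- The biharmonic Poisson kernel `F₀(z) = H₀(z) + (1/2)(1-|z|²)³/|1-z|⁴`. -/
noncomputable def F0 (z : ℂ) : ℝ :=
  H0 z + (1 - ‖z‖ ^ 2) ^ 3 / (2 * ‖1 - z‖ ^ 4)

/-- `F₀[f](z) = (1/(2π)) ∫₀^{2π} F₀(z e^{-iθ}) f(e^{iθ}) dθ`. -/
noncomputable def F0int (f : ℂ → ℂ) (z : ℂ) : ℂ :=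
  (1 / (2 * (Real.pi : ℂ))) * ∫ θ in (0:ℝ)..(2 * Real.pi),
    ((F0 (z * Complex.exp (-(θ : ℂ) * Complex.I)) : ℝ) : ℂ) * f (Complex.exp ((θ : ℂ) * Complex.I))

/-- `H₀[h](z) = (1/(2π)) ∫₀^{2π} H₀(z e^{-iθ}) h(e^{iθ}) dθ`. -/
noncomputable def H0int (h : ℂ → ℂ) (z : ℂ) : ℂ :=
  (1 / (2 * (Real.pi : ℂ))) * ∫ θ in (0:ℝ)..(2 * Real.pi),
    ((H0 (z * Complex.exp (-(θ : ℂ) * Complex.I)) : ℝ) : ℂ) * h (Complex.exp ((θ : ℂ) * Complex.I))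

/-- `G[g](z) = ∫_𝔻 G(z,ζ) g(ζ) dA(ζ)`. -/
noncomputable def Gint (g : ℂ → ℂ) (z : ℂ) : ℂ :=
  ∫ ζ, ((Gker z ζ : ℝ) : ℂ) * g ζ ∂dA

/-- The sup of `|g|` over a set `s`. -/
noncomputable def supAbsOn (g : ℂ → ℂ) (s : Set ℂ) : ℝ :=
  sSup ((fun z => ‖g z‖) '' s)

/-- The Laplacian `Δ = (1/4)(∂²/∂x² + ∂²/∂y²)`. -/
noncomputable def lap (w : ℂ → ℂ) (z : ℂ) : ℂ :=
  (fderiv ℝ (fun x => fderiv ℝ w x 1) z 1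
    + fderiv ℝ (fun x => fderiv ℝ w x Complex.I) z Complex.I) / 4

/-!
On a circle `|w| = r < 1` the kernel `F₀` is the real part of
`(1 + w) / (1 - w) + (1 - r²) w / (1 - w)²`; with `r` held fixed this function is holomorphic on the
closed disk of radius `r`, so by the mean value property its average over the circle is its value
`1` at the origin.
-/

open ComplexConjugate

theorem DiffContOnCl.circleAverage_re {g : ℂ → ℂ} {c : ℂ} {R : ℝ}
    (hg : DiffContOnCl ℂ g (ball c |R|)) :
    Real.circleAverage (fun ζ ↦ (g ζ).re) c R = (g c).re := by
  rcases eq_or_ne R 0 with rfl | hR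
  · simp
  have hint : CircleIntegrable g c R := ContinuousOn.circleIntegrable' <|
    hg.continuousOn.mono <| (closure_ball c (abs_ne_zero.mpr hR)).symm ▸ sphere_subset_closedBall
  rw [← hg.circleAverage]
  exact reCLM.circleAverage_comp_comm hint

noncomputable def F0Herglotz (c : ℝ) (w : ℂ) : ℂ :=
  (1 + w) / (1 - w) + c * (w / (1 - w) ^ 2)

theorem F0_eq_re_F0Herglotz {w : ℂ} (hw : w ≠ 1) :
    F0 w = (F0Herglotz (1 - ‖w‖ ^ 2) w).re := by
  have hd : 1 - w ≠ 0 := sub_ne_zero.mpr hw.symm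
  have hd' : 1 - conj w ≠ 0 := by rwa [← map_one (starRingEnd ℂ), ← map_sub, map_ne_zero]
  have hd2 : ((‖1 - w‖ : ℝ) : ℂ) ^ 2 = (1 - w) * (1 - conj w) := by
    simpa using (mul_conj' (1 - w)).symm
  apply Complex.ofReal_injective
  rw [re_eq_add_conj]
  simp only [F0, H0, F0Herglotz, map_add, map_div₀, map_mul, map_sub, map_one, map_pow, conj_ofReal]
  push_cast
  rw [← mul_conj', show ((‖1 - w‖ : ℝ) : ℂ) ^ 4 = (((‖1 - w‖ : ℝ) : ℂ) ^ 2) ^ 2 by ring, hd2]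
  -- a rational identity in the independent variables `w` and `w̄`
  generalize conj w = v at hd' ⊢
  field_simp
  ring

theorem differentiableAt_F0Herglotz (c : ℝ) {w : ℂ} (hw : w ≠ 1) :
    DifferentiableAt ℂ (F0Herglotz c) w := by
  have hd : 1 - w ≠ 0 := sub_ne_zero.mpr hw.symm
  unfold F0Herglotz
  fun_prop (disch := simpa)

theorem circleAverage_F0_mul {a : ℂ} (ha : ‖a‖ < 1) :
    Real.circleAverage (fun ζ ↦ F0 (a * ζ)) 0 1 = 1 := by
  have hne : ∀ ζ ∈ closedBall (0 : ℂ) 1, a * ζ ≠ 1 := fun ζ hζ h ↦ by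
    have : ‖a * ζ‖ < 1 := by
      rw [norm_mul]; exact mul_lt_one_of_nonneg_of_lt_one_left (norm_nonneg a) ha (by simpa using hζ)
    simp [h] at this
  have hg : DiffContOnCl ℂ (fun ζ ↦ F0Herglotz (1 - ‖a‖ ^ 2) (a * ζ)) (ball 0 |1|) := by
    refine DifferentiableOn.diffContOnCl_ball (U := closedBall 0 1) ?_ (by simp)
    exact fun ζ hζ ↦ ((differentiableAt_F0Herglotz _ (hne ζ hζ)).comp ζ
      (differentiableAt_id.const_mul a)).differentiableWithinAt
  calc Real.circleAverage (fun ζ ↦ F0 (a * ζ)) 0 1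
      = Real.circleAverage (fun ζ ↦ (F0Herglotz (1 - ‖a‖ ^ 2) (a * ζ)).re) 0 1 := by
        refine Real.circleAverage_congr_sphere fun ζ hζ ↦ ?_
        have hζ1 : ‖ζ‖ = 1 := by simpa using hζ
        simp only [F0_eq_re_F0Herglotz (hne ζ (sphere_subset_closedBall (by simpa using hζ))),
          norm_mul, hζ1, mul_one]
    _ = 1 := by rw [hg.circleAverage_re]; simp [F0Herglotz]

/-- For every `z ∈ 𝔻`, `(1/(2π)) ∫₀^{2π} F₀(z e^{-iθ}) dθ = 1`. -/
theorem mean_one_of_F0 (z : ℂ) (hz : z ∈ ball (0 : ℂ) 1) :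
    (1 / (2 * Real.pi)) *
      ∫ θ in (0:ℝ)..(2 * Real.pi), F0 (z * Complex.exp (-(θ : ℂ) * Complex.I)) = 1 := by
  have h : (1 / (2 * Real.pi)) *
      ∫ θ in (0:ℝ)..(2 * Real.pi), F0 (z * Complex.exp (-(θ : ℂ) * Complex.I))
      = Real.circleAverage (fun ζ ↦ F0 (z * ζ⁻¹)) 0 1 := by
    simp [Real.circleAverage_def, circleMap_zero, ← Complex.exp_neg]
  rw [h, Real.circleAverage_zero_one_congr_inv (f := fun ζ ↦ F0 (z * ζ)),
    circleAverage_F0_mul (mem_ball_zero_iff.mp hz)]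
end

section
/- For every z ∈ 𝔻, ∫_𝔻 |G(z,ζ)| dA(ζ) ≤ 3/4; in particular, for every g continuous on the closed unit disk, ∫_𝔻 |G(z,ζ) g(ζ)| dA(ζ) ≤ (3/4)‖g‖_∞. -/
open MeasureTheory Complex Metric

/-! Since `|1 - ζ̄z|² = |z - ζ|² + (1 - |z|²)(1 - |ζ|²)`, the kernel has the form
`G = a log((a + c)/a) - c` with `a = |z - ζ|²` and `c = (1 - |z|²)(1 - |ζ|²)`, and
`0 ≤ a log(1 + c/a) ≤ c` gives `|G(z,ζ)| ≤ c ≤ 1 - |ζ|²`. The integral of `1 - |ζ|²` against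
`dA` is `1/2`; the bound `3/4` already follows, without polar coordinates, from the step function
equal to `1` on the disk of radius `1/√2` and to `1/2` outside it. -/

theorem norm_one_sub_conj_mul_sq (z ζ : ℂ) :
    ‖1 - (starRingEnd ℂ) ζ * z‖ ^ 2 = ‖z - ζ‖ ^ 2 + (1 - ‖z‖ ^ 2) * (1 - ‖ζ‖ ^ 2) := by
  simp only [Complex.sq_norm, Complex.normSq_apply, Complex.sub_re, Complex.sub_im,
    Complex.mul_re, Complex.mul_im, Complex.conj_re, Complex.conj_im, Complex.one_re,
    Complex.one_im]
  ring

theorem Real.mul_log_add_div_self_nonneg {a c : ℝ} (ha : 0 ≤ a) (hc : 0 ≤ c) :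
    0 ≤ a * Real.log ((a + c) / a) := by
  rcases ha.eq_or_lt with rfl | ha
  · simp
  · exact mul_nonneg ha.le (Real.log_nonneg ((le_div_iff₀ ha).2 (by linarith)))

theorem Real.mul_log_add_div_self_le {a c : ℝ} (ha : 0 ≤ a) (hc : 0 ≤ c) :
    a * Real.log ((a + c) / a) ≤ c := by
  rcases ha.eq_or_lt with rfl | ha
  · simpa using hc
  · calc a * Real.log ((a + c) / a) ≤ a * ((a + c) / a - 1) :=
          mul_le_mul_of_nonneg_left (Real.log_le_sub_one_of_pos (by positivity)) ha.le
      _ = c := by field_simp; ring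

theorem Gker_eq_mul_log_sub (z ζ : ℂ) :
    Gker z ζ = ‖z - ζ‖ ^ 2 * Real.log ((‖z - ζ‖ ^ 2 + (1 - ‖z‖ ^ 2) * (1 - ‖ζ‖ ^ 2)) / ‖z - ζ‖ ^ 2)
      - (1 - ‖z‖ ^ 2) * (1 - ‖ζ‖ ^ 2) := by
  rw [Gker, norm_div, div_pow, norm_one_sub_conj_mul_sq]

theorem abs_Gker_le {z ζ : ℂ} (hz : ‖z‖ ≤ 1) (hζ : ‖ζ‖ ≤ 1) :
    |Gker z ζ| ≤ (1 - ‖z‖ ^ 2) * (1 - ‖ζ‖ ^ 2) := by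
  have hc : 0 ≤ (1 - ‖z‖ ^ 2) * (1 - ‖ζ‖ ^ 2) :=
    mul_nonneg (by nlinarith [norm_nonneg z]) (by nlinarith [norm_nonneg ζ])
  rw [Gker_eq_mul_log_sub]
  exact abs_sub_le_of_nonneg_of_le (Real.mul_log_add_div_self_nonneg (sq_nonneg _) hc)
    (Real.mul_log_add_div_self_le (sq_nonneg _) hc) hc le_rfl

theorem abs_Gker_le_one_sub_sq {z ζ : ℂ} (hz : ‖z‖ ≤ 1) (hζ : ‖ζ‖ ≤ 1) :
    |Gker z ζ| ≤ 1 - ‖ζ‖ ^ 2 := by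
  refine (abs_Gker_le hz hζ).trans (mul_le_of_le_one_left ?_ ?_)
  · nlinarith [norm_nonneg ζ]
  · linarith [sq_nonneg ‖z‖]

theorem ae_dA_mem_ball : ∀ᵐ ζ ∂dA, ζ ∈ ball (0 : ℂ) 1 :=
  Measure.ae_smul_measure (ae_restrict_mem measurableSet_ball) _

theorem dA_ball {r : ℝ} (hr0 : 0 ≤ r) (hr1 : r ≤ 1) :
    dA (ball 0 r) = ENNReal.ofReal (r ^ 2) := by
  rw [dA, Measure.smul_apply, Measure.restrict_apply measurableSet_ball,
    Set.inter_eq_self_of_subset_left (ball_subset_ball hr1), Complex.volume_ball,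
    ← ENNReal.ofReal_pow hr0, ← ENNReal.ofReal_coe_nnreal, NNReal.coe_real_pi, smul_eq_mul,
    ← ENNReal.ofReal_mul (by positivity), ← ENNReal.ofReal_mul (by positivity)]
  congr 1
  field_simp

theorem dA_univ : dA Set.univ = 1 := by
  rw [dA, Measure.smul_apply, Measure.restrict_apply_univ, Complex.volume_ball,
    ENNReal.ofReal_one, one_pow, one_mul, ← ENNReal.ofReal_coe_nnreal, NNReal.coe_real_pi,
    smul_eq_mul, ← ENNReal.ofReal_mul (by positivity), one_div_mul_cancel Real.pi_ne_zero,
    ENNReal.ofReal_one]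

theorem one_sub_norm_sq_le_indicator (ζ : ℂ) :
    ENNReal.ofReal (1 - ‖ζ‖ ^ 2) ≤
      ENNReal.ofReal (1 / 2) + (ball 0 √(1 / 2)).indicator (fun _ => ENNReal.ofReal (1 / 2)) ζ := by
  by_cases hζ : ζ ∈ ball (0 : ℂ) √(1 / 2)
  · rw [Set.indicator_of_mem hζ, ← ENNReal.ofReal_add (by norm_num) (by norm_num)]
    exact ENNReal.ofReal_le_ofReal (by nlinarith [sq_nonneg ‖ζ‖])
  · rw [Set.indicator_of_notMem hζ, add_zero]
    have : √(1 / 2) ≤ ‖ζ‖ := by simpa using hζ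
    refine ENNReal.ofReal_le_ofReal ?_
    nlinarith [Real.sq_sqrt (show (0 : ℝ) ≤ 1 / 2 by norm_num), Real.sqrt_nonneg (1 / 2 : ℝ)]

theorem lintegral_one_sub_norm_sq_le :
    ∫⁻ ζ, ENNReal.ofReal (1 - ‖ζ‖ ^ 2) ∂dA ≤ ENNReal.ofReal (3 / 4) := by
  have hr1 : √(1 / 2 : ℝ) ≤ 1 := Real.sqrt_le_one.2 (by norm_num)
  calc ∫⁻ ζ, ENNReal.ofReal (1 - ‖ζ‖ ^ 2) ∂dA
      ≤ ∫⁻ ζ, ENNReal.ofReal (1 / 2) +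
          (ball 0 √(1 / 2)).indicator (fun _ => ENNReal.ofReal (1 / 2)) ζ ∂dA :=
        lintegral_mono one_sub_norm_sq_le_indicator
    _ = ENNReal.ofReal (1 / 2) * dA Set.univ + ENNReal.ofReal (1 / 2) * dA (ball 0 √(1 / 2)) := by
        rw [lintegral_add_left measurable_const, lintegral_const,
          lintegral_indicator_const measurableSet_ball]
    _ = ENNReal.ofReal (3 / 4) := by
        rw [dA_univ, dA_ball (Real.sqrt_nonneg _) hr1, Real.sq_sqrt (by norm_num), mul_one,
          ← ENNReal.ofReal_mul (by norm_num), ← ENNReal.ofReal_add (by norm_num) (by norm_num)]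
        norm_num

theorem lintegral_abs_Gker_le {z : ℂ} (hz : ‖z‖ ≤ 1) :
    ∫⁻ ζ, ENNReal.ofReal |Gker z ζ| ∂dA ≤ ENNReal.ofReal (3 / 4) :=
  calc ∫⁻ ζ, ENNReal.ofReal |Gker z ζ| ∂dA ≤ ∫⁻ ζ, ENNReal.ofReal (1 - ‖ζ‖ ^ 2) ∂dA :=
        lintegral_mono_ae <| ae_dA_mem_ball.mono fun _ hζ =>
          ENNReal.ofReal_le_ofReal (abs_Gker_le_one_sub_sq hz (mem_ball_zero_iff.1 hζ).le)
    _ ≤ ENNReal.ofReal (3 / 4) := lintegral_one_sub_norm_sq_le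

theorem lintegral_norm_ofReal_mul_le {f : ℂ → ℝ} {g : ℂ → ℂ} {M : ℝ}
    (hg : ∀ ζ ∈ ball (0 : ℂ) 1, ‖g ζ‖ ≤ M) :
    ∫⁻ ζ, ENNReal.ofReal ‖((f ζ : ℝ) : ℂ) * g ζ‖ ∂dA ≤
      ENNReal.ofReal M * ∫⁻ ζ, ENNReal.ofReal |f ζ| ∂dA := by
  rw [← lintegral_const_mul' _ _ ENNReal.ofReal_ne_top]
  refine lintegral_mono_ae <| ae_dA_mem_ball.mono fun ζ hζ => ?_
  rw [norm_mul, Complex.norm_real, Real.norm_eq_abs, ENNReal.ofReal_mul (abs_nonneg _), mul_comm]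
  exact mul_le_mul_left (ENNReal.ofReal_le_ofReal (hg ζ hζ)) _

theorem ContinuousOn.norm_le_supAbsOn {g : ℂ → ℂ} {K s : Set ℂ} (hg : ContinuousOn g K)
    (hK : IsCompact K) (hsK : s ⊆ K) {ζ : ℂ} (hζ : ζ ∈ s) : ‖g ζ‖ ≤ supAbsOn g s :=
  le_csSup ((hK.bddAbove_image hg.norm).mono (Set.image_mono hsK)) ⟨ζ, hζ, rfl⟩

/-- For every `z ∈ 𝔻`, `∫_𝔻 |G(z,ζ)| dA(ζ) ≤ 3/4`, and hence
`∫_𝔻 |G(z,ζ) g(ζ)| dA(ζ) ≤ (3/4)‖g‖_∞` for `g` continuous on the closed disk. -/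
theorem integral_abs_Gker_le (z : ℂ) (hz : z ∈ ball (0 : ℂ) 1) :
    (∫⁻ ζ, ENNReal.ofReal |Gker z ζ| ∂dA) ≤ ENNReal.ofReal (3 / 4) ∧
    ∀ g : ℂ → ℂ, ContinuousOn g (closedBall (0 : ℂ) 1) →
      (∫⁻ ζ, ENNReal.ofReal (‖((Gker z ζ : ℝ) : ℂ) * g ζ‖) ∂dA) ≤
        ENNReal.ofReal ((3 / 4) * supAbsOn g (ball (0 : ℂ) 1)) := by
  have hG := lintegral_abs_Gker_le (mem_ball_zero_iff.1 hz).le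
  refine ⟨hG, fun g hg => ?_⟩
  have hM : ∀ ζ ∈ ball (0 : ℂ) 1, ‖g ζ‖ ≤ supAbsOn g (ball 0 1) := fun _ =>
    hg.norm_le_supAbsOn (isCompact_closedBall 0 1) ball_subset_closedBall
  have hM0 : 0 ≤ supAbsOn g (ball 0 1) := (norm_nonneg _).trans (hM 0 (mem_ball_self one_pos))
  calc ∫⁻ ζ, ENNReal.ofReal ‖((Gker z ζ : ℝ) : ℂ) * g ζ‖ ∂dA
      ≤ ENNReal.ofReal (supAbsOn g (ball 0 1)) * ∫⁻ ζ, ENNReal.ofReal |Gker z ζ| ∂dA :=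
        lintegral_norm_ofReal_mul_le hM
    _ ≤ ENNReal.ofReal (supAbsOn g (ball 0 1)) * ENNReal.ofReal (3 / 4) := by gcongr
    _ = ENNReal.ofReal (3 / 4 * supAbsOn g (ball 0 1)) := by
        rw [← ENNReal.ofReal_mul hM0, mul_comm]
end

section
/- For every z ∈ 𝔻, ∫_𝔻 (1−|ζ|²) / (|z−ζ| · |1−conj(ζ)z|) dA(ζ) ≤ 4/3. -/
open MeasureTheory Complex Metric

/-!
By the layer cake formula, `∫ K dA = (1/π) ∫₀^∞ |{K > t}| dt`. Since
`|1 - ζ̄z|² - |z - ζ|² = (1 - |z|²)(1 - |ζ|²)`, the inequality `K(ζ) > t` reads `b² - a² > L a b`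
with `a = |z - ζ|`, `b = |1 - ζ̄z|`, `L = (1 - |z|²) t`, and forces `a < ρ b` for the root
`ρ ∈ (0, 1]` of `ρ² + Lρ = 1`. So `{K > t}` lies in a pseudo-hyperbolic disc, a Euclidean disc of
radius `R = ρ(1 - u)/(1 - uρ²)`, `u = |z|²`. Substituting `ρ` for `t`,
`∫₀^∞ R² dt = (1 - u) ∫₀¹ (1 + ρ²)/(1 - uρ²)² dρ`, and as `(1 - u)² ≤ (1 - uρ²)²` the integrand is
at most `(1 - u)(1 + uρ²)/(1 - uρ²)² + ρ²`, the derivative of `(1 - u)ρ/(1 - uρ²) + ρ³/3`, whose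
value at `ρ = 1` is `4/3`.
-/

open Real Filter Set Topology Complex ComplexConjugate

namespace SingularKernel

noncomputable def rho (L : ℝ) : ℝ := (√(L ^ 2 + 4) - L) / 2

lemma rho_sq_add_mul (L : ℝ) : rho L ^ 2 + L * rho L = 1 := by
  unfold rho
  linear_combination (1 / 4) * Real.sq_sqrt (by positivity : (0 : ℝ) ≤ L ^ 2 + 4)

lemma rho_pos (L : ℝ) : 0 < rho L := by
  unfold rho
  nlinarith [Real.sq_sqrt (by positivity : (0 : ℝ) ≤ L ^ 2 + 4), Real.sqrt_nonneg (L ^ 2 + 4)]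

lemma rho_le_one {L : ℝ} (hL : 0 ≤ L) : rho L ≤ 1 := by
  nlinarith [rho_sq_add_mul L, rho_pos L]

lemma rho_zero : rho 0 = 1 := by
  nlinarith [rho_sq_add_mul 0, rho_pos 0]

lemma hasDerivAt_rho (L : ℝ) : HasDerivAt rho (-rho L ^ 2 / (1 + rho L ^ 2)) L := by
  have hsqrt : √(L ^ 2 + 4) = L + 2 * rho L := by unfold rho; ring
  have hpos : 0 < L + 2 * rho L := hsqrt ▸ Real.sqrt_pos.mpr (by positivity)
  have h := (((hasDerivAt_pow 2 L).add_const 4).sqrt (by positivity)).sub (hasDerivAt_id L)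
  refine (h.div_const 2).congr_deriv ?_
  rw [hsqrt]
  simp only [Nat.cast_ofNat, pow_one, Nat.add_one_sub_one]
  field_simp
  linear_combination 2 * rho L * rho_sq_add_mul L

lemma tendsto_rho_atTop : Tendsto rho atTop (𝓝 0) := by
  refine squeeze_zero' (Eventually.of_forall fun L => (rho_pos L).le)
    (eventually_gt_atTop 0 |>.mono fun L hL => ?_)
    (tendsto_const_nhds.div_atTop tendsto_id : Tendsto (fun L : ℝ => 1 / L) atTop (𝓝 0))
  rw [le_div_iff₀ hL]
  nlinarith [rho_sq_add_mul L, rho_pos L]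

lemma lt_rho_mul {L a b : ℝ} (ha : 0 ≤ a) (hb : 0 ≤ b) (h : L * (a * b) < b ^ 2 - a ^ 2) :
    a < rho L * b := by
  have hρ := rho_pos L
  have hprod : 0 < (b + rho L * a) * (rho L * b - a) := by
    have hfactor : (b + rho L * a) * (rho L * b - a) = rho L * (b ^ 2 - a ^ 2 - L * (a * b)) := by
      linear_combination (a * b) * rho_sq_add_mul L
    rw [hfactor]
    exact mul_pos hρ (by linarith)
  linarith [pos_of_mul_pos_right hprod (by positivity)]

lemma sq_norm_one_sub_conj_mul_sub_sq_norm_sub (z ζ : ℂ) :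
    ‖1 - conj ζ * z‖ ^ 2 - ‖z - ζ‖ ^ 2 = (1 - ‖z‖ ^ 2) * (1 - ‖ζ‖ ^ 2) := by
  simp only [Complex.sq_norm, normSq_apply, sub_re, sub_im, one_re, one_im, mul_re, mul_im,
    conj_re, conj_im]
  ring

lemma mem_ball_of_norm_sub_lt_mul {z ζ : ℂ} {ρ : ℝ} (hz : ‖z‖ < 1) (hρ : ρ ≤ 1)
    (h : ‖z - ζ‖ < ρ * ‖1 - conj ζ * z‖) :
    ζ ∈ ball (((1 - ρ ^ 2) / (1 - ‖z‖ ^ 2 * ρ ^ 2) : ℝ) * z)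
      (ρ * (1 - ‖z‖ ^ 2) / (1 - ‖z‖ ^ 2 * ρ ^ 2)) := by
  have hρ0 : 0 < ρ := pos_of_mul_pos_left ((norm_nonneg _).trans_lt h) (norm_nonneg _)
  have hu : ‖z‖ ^ 2 < 1 := by nlinarith [norm_nonneg z]
  have hρ2 : ρ ^ 2 ≤ 1 := by nlinarith
  have hD : 0 < 1 - ‖z‖ ^ 2 * ρ ^ 2 := by
    nlinarith [mul_le_mul_of_nonneg_left hρ2 (sq_nonneg ‖z‖)]
  have hid : ‖((1 - ‖z‖ ^ 2 * ρ ^ 2 : ℝ) : ℂ) * ζ - ((1 - ρ ^ 2 : ℝ) : ℂ) * z‖ ^ 2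
      = (1 - ‖z‖ ^ 2 * ρ ^ 2) * (‖z - ζ‖ ^ 2 - ρ ^ 2 * ‖1 - conj ζ * z‖ ^ 2)
        + (ρ * (1 - ‖z‖ ^ 2)) ^ 2 := by
    simp only [Complex.sq_norm, normSq_apply, sub_re, sub_im, one_re, one_im, mul_re, mul_im,
      conj_re, conj_im, ofReal_re, ofReal_im]
    ring
  have hlt : ‖((1 - ‖z‖ ^ 2 * ρ ^ 2 : ℝ) : ℂ) * ζ - ((1 - ρ ^ 2 : ℝ) : ℂ) * z‖
      < ρ * (1 - ‖z‖ ^ 2) := by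
    refine lt_of_pow_lt_pow_left₀ 2 (by nlinarith) ?_
    have := pow_lt_pow_left₀ h (norm_nonneg _) two_ne_zero
    rw [hid]
    nlinarith
  have hscale : ((1 - ‖z‖ ^ 2 * ρ ^ 2 : ℝ) : ℂ) * ζ - ((1 - ρ ^ 2 : ℝ) : ℂ) * z
      = ((1 - ‖z‖ ^ 2 * ρ ^ 2 : ℝ) : ℂ) * (ζ - ((1 - ρ ^ 2) / (1 - ‖z‖ ^ 2 * ρ ^ 2) : ℝ) * z) := by
    have : ((1 - ‖z‖ ^ 2 * ρ ^ 2 : ℝ) : ℂ) ≠ 0 := Complex.ofReal_ne_zero.mpr hD.ne'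
    push_cast at this ⊢
    field_simp
  rw [hscale, norm_mul, Complex.norm_real, Real.norm_of_nonneg hD.le] at hlt
  rw [mem_ball, dist_eq_norm, lt_div_iff₀ hD]
  linarith

noncomputable def singularKernel (z ζ : ℂ) : ℝ :=
  (1 - ‖ζ‖ ^ 2) / (‖z - ζ‖ * ‖1 - conj ζ * z‖)

noncomputable def levelRho (u t : ℝ) : ℝ := rho ((1 - u) * t)

/-- Radius of the Euclidean disc `|z - ζ| < ρ |1 - ζ̄ z|`, where `ρ = levelRho u t`, `u = |z|²`. -/
noncomputable def levelRadius (u t : ℝ) : ℝ :=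
  levelRho u t * (1 - u) / (1 - u * levelRho u t ^ 2)

lemma mul_rho_sq_lt_one {u L : ℝ} (hu0 : 0 ≤ u) (hu1 : u < 1) (hL : 0 ≤ L) :
    u * rho L ^ 2 < 1 := by
  have : rho L ^ 2 ≤ 1 := pow_le_one₀ (rho_pos L).le (rho_le_one hL)
  nlinarith

lemma levelRadius_nonneg {u t : ℝ} (hu0 : 0 ≤ u) (hu1 : u < 1) (ht : 0 ≤ t) :
    0 ≤ levelRadius u t := by
  have hL : 0 ≤ (1 - u) * t := mul_nonneg (by linarith) ht
  unfold levelRadius levelRho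
  exact div_nonneg (mul_nonneg (rho_pos _).le (by linarith))
    (by linarith [mul_rho_sq_lt_one hu0 hu1 hL])

lemma superlevel_subset_ball {z : ℂ} (hz : ‖z‖ < 1) {t : ℝ} (ht : 0 < t) :
    ∃ c, {ζ | t < singularKernel z ζ} ∩ ball 0 1 ⊆ ball c (levelRadius (‖z‖ ^ 2) t) := by
  refine ⟨_, fun ζ ⟨hlt, hζ⟩ => mem_ball_of_norm_sub_lt_mul hz (rho_le_one ?_) ?_⟩
  · have : 0 ≤ 1 - ‖z‖ ^ 2 := by nlinarith [norm_nonneg z]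
    positivity
  rw [mem_ofPred_eq, singularKernel] at hlt
  rw [mem_ball_zero_iff] at hζ
  have hprod : 0 < ‖z - ζ‖ * ‖1 - conj ζ * z‖ := by
    refine (by positivity : 0 ≤ ‖z - ζ‖ * ‖1 - conj ζ * z‖).lt_of_ne fun h => ?_
    rw [← h, div_zero] at hlt
    exact ht.not_gt hlt
  have hz2 : 0 < 1 - ‖z‖ ^ 2 := by nlinarith [norm_nonneg z]
  refine lt_rho_mul (norm_nonneg _) (norm_nonneg _) ?_
  rw [sq_norm_one_sub_conj_mul_sub_sq_norm_sub, mul_assoc]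
  exact mul_lt_mul_of_pos_left ((lt_div_iff₀ hprod).mp hlt) hz2

lemma volume_superlevel_le {z : ℂ} (hz : ‖z‖ < 1) {t : ℝ} (ht : 0 < t) :
    volume ({ζ | t < singularKernel z ζ} ∩ ball 0 1) ≤
      NNReal.pi * ENNReal.ofReal (levelRadius (‖z‖ ^ 2) t ^ 2) := by
  obtain ⟨c, hc⟩ := superlevel_subset_ball hz ht
  have hz2 : ‖z‖ ^ 2 < 1 := by nlinarith [norm_nonneg z]
  rw [ENNReal.ofReal_pow (levelRadius_nonneg (sq_nonneg _) hz2 ht.le), mul_comm]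
  exact (measure_mono hc).trans (Complex.volume_ball c _).le

lemma hasDerivAt_levelRho (u t : ℝ) :
    HasDerivAt (levelRho u) (-levelRho u t ^ 2 / (1 + levelRho u t ^ 2) * (1 - u)) t := by
  have h := (hasDerivAt_rho ((1 - u) * t)).comp t ((hasDerivAt_id t).const_mul (1 - u))
  rw [mul_one] at h
  exact h

lemma lintegral_Ioi_ofReal_le_of_hasDerivAt {f g Ψ : ℝ → ℝ} {a l : ℝ}
    (hΨ : ∀ t ∈ Ici a, HasDerivAt Ψ (g t) t) (hg : ∀ t ∈ Ioi a, 0 ≤ g t)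
    (hfg : ∀ t ∈ Ioi a, f t ≤ g t) (hl : Tendsto Ψ atTop (𝓝 l)) :
    ∫⁻ t in Ioi a, ENNReal.ofReal (f t) ≤ ENNReal.ofReal (l - Ψ a) := by
  calc ∫⁻ t in Ioi a, ENNReal.ofReal (f t)
      ≤ ∫⁻ t in Ioi a, ENNReal.ofReal (g t) :=
        setLIntegral_mono_ae' measurableSet_Ioi
          (ae_of_all _ fun t ht => ENNReal.ofReal_le_ofReal (hfg t ht))
    _ = ENNReal.ofReal (∫ t in Ioi a, g t) :=
        (ofReal_integral_eq_lintegral_ofReal (integrableOn_Ioi_deriv_of_nonneg' hΨ hg hl)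
          ((ae_restrict_iff' measurableSet_Ioi).mpr (ae_of_all _ hg))).symm
    _ = ENNReal.ofReal (l - Ψ a) := by rw [integral_Ioi_of_hasDerivAt_of_nonneg' hΨ hg hl]

noncomputable def levelPrimitive (u r : ℝ) : ℝ := (1 - u) * r / (1 - u * r ^ 2) + r ^ 3 / 3

lemma hasDerivAt_levelPrimitive {u r : ℝ} (hur : u * r ^ 2 < 1) :
    HasDerivAt (levelPrimitive u)
      ((1 - u) * (1 + u * r ^ 2) / (1 - u * r ^ 2) ^ 2 + r ^ 2) r := by
  have hD : 1 - u * r ^ 2 ≠ 0 := by linarith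
  have hden : HasDerivAt (fun r => 1 - u * r ^ 2) (-(u * (2 * r))) r := by
    simpa using ((hasDerivAt_pow 2 r).const_mul u).const_sub 1
  have h := (((hasDerivAt_id r).const_mul (1 - u)).div hden hD).add
    ((hasDerivAt_pow 3 r).div_const 3)
  refine h.congr_deriv ?_
  simp only [id, Nat.cast_ofNat]
  field_simp
  ring

/-- The factor `r² (1 - u) / (1 + r²)` is `-∂ₜ levelRho u t` at `r = levelRho u t`. -/
lemma sq_le_levelPrimitive_deriv_mul {u r : ℝ} (hu0 : 0 ≤ u) (hu1 : u < 1) (hr0 : 0 < r)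
    (hr1 : r ≤ 1) :
    (r * (1 - u) / (1 - u * r ^ 2)) ^ 2 ≤
      ((1 - u) * (1 + u * r ^ 2) / (1 - u * r ^ 2) ^ 2 + r ^ 2) *
        (r ^ 2 / (1 + r ^ 2) * (1 - u)) := by
  have hr2 : r ^ 2 ≤ 1 := pow_le_one₀ hr0.le hr1
  have hD : 0 < 1 - u * r ^ 2 := by nlinarith
  have hdiff : ((1 - u) * (1 + u * r ^ 2) / (1 - u * r ^ 2) ^ 2 + r ^ 2) *
        (r ^ 2 / (1 + r ^ 2) * (1 - u)) - (r * (1 - u) / (1 - u * r ^ 2)) ^ 2 =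
      r ^ 4 * (1 - u) * (u * (1 - r ^ 2)) * (2 - u - u * r ^ 2) /
        ((1 + r ^ 2) * (1 - u * r ^ 2) ^ 2) := by
    field_simp
    ring
  have hdiff_nonneg : 0 ≤ r ^ 4 * (1 - u) * (u * (1 - r ^ 2)) * (2 - u - u * r ^ 2) /
      ((1 + r ^ 2) * (1 - u * r ^ 2) ^ 2) := by
    apply div_nonneg _ (by positivity)
    apply mul_nonneg (mul_nonneg (mul_nonneg (by positivity) (by linarith))
      (mul_nonneg hu0 (by linarith))) (by linarith)
  linarith

lemma lintegral_levelRadius_sq_le {u : ℝ} (hu0 : 0 ≤ u) (hu1 : u < 1) :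
    ∫⁻ t in Ioi 0, ENNReal.ofReal (levelRadius u t ^ 2) ≤ ENNReal.ofReal (4 / 3) := by
  have hL {t : ℝ} (ht : 0 ≤ t) : 0 ≤ (1 - u) * t := mul_nonneg (by linarith) ht
  have hderiv (t : ℝ) (ht : t ∈ Ici 0) :
      HasDerivAt (fun t => -levelPrimitive u (levelRho u t))
        (((1 - u) * (1 + u * levelRho u t ^ 2) / (1 - u * levelRho u t ^ 2) ^ 2 +
            levelRho u t ^ 2) * (levelRho u t ^ 2 / (1 + levelRho u t ^ 2) * (1 - u))) t :=
    ((hasDerivAt_levelPrimitive (r := levelRho u t) (mul_rho_sq_lt_one hu0 hu1 (hL ht))).comp t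
      (hasDerivAt_levelRho u t)).neg.congr_deriv (by ring)
  have hfg (t : ℝ) (ht : t ∈ Ioi 0) : levelRadius u t ^ 2 ≤
      ((1 - u) * (1 + u * levelRho u t ^ 2) / (1 - u * levelRho u t ^ 2) ^ 2 +
        levelRho u t ^ 2) * (levelRho u t ^ 2 / (1 + levelRho u t ^ 2) * (1 - u)) :=
    sq_le_levelPrimitive_deriv_mul hu0 hu1 (rho_pos _) (rho_le_one (hL (le_of_lt ht)))
  have hlim : Tendsto (fun t => -levelPrimitive u (levelRho u t)) atTop (𝓝 0) := by
    have hcont := (hasDerivAt_levelPrimitive (u := u) (r := 0) (by simp)).continuousAt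
    have hρ : Tendsto (levelRho u) atTop (𝓝 0) :=
      tendsto_rho_atTop.comp (tendsto_id.const_mul_atTop (by linarith))
    have h0 : -levelPrimitive u 0 = 0 := by simp [levelPrimitive]
    exact h0 ▸ (hcont.tendsto.comp hρ).neg
  have hval : 0 - -levelPrimitive u (levelRho u 0) = 4 / 3 := by
    have : 1 - u ≠ 0 := by linarith
    simp only [levelRho, mul_zero, rho_zero, levelPrimitive]
    field_simp
    ring
  rw [← hval]
  exact lintegral_Ioi_ofReal_le_of_hasDerivAt hderiv (fun t ht => (sq_nonneg _).trans (hfg t ht))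
    hfg hlim

lemma setLIntegral_ball_singularKernel_le {z : ℂ} (hz : ‖z‖ < 1) :
    ∫⁻ ζ in ball 0 1, ENNReal.ofReal (singularKernel z ζ) ≤
      NNReal.pi * ENNReal.ofReal (4 / 3) := by
  have hmeas : Measurable (singularKernel z) := by
    unfold singularKernel
    fun_prop
  have hnonneg : 0 ≤ᵐ[volume.restrict (ball 0 1)] singularKernel z := by
    refine (ae_restrict_iff' measurableSet_ball).mpr (ae_of_all _ fun ζ hζ => ?_)
    have : ‖ζ‖ < 1 := mem_ball_zero_iff.mp hζ
    have : 0 ≤ 1 - ‖ζ‖ ^ 2 := by nlinarith [norm_nonneg ζ]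
    unfold singularKernel
    positivity
  rw [lintegral_eq_lintegral_meas_lt _ hnonneg hmeas.aemeasurable]
  calc ∫⁻ t in Ioi 0, volume.restrict (ball 0 1) {ζ | t < singularKernel z ζ}
      ≤ ∫⁻ t in Ioi 0, NNReal.pi * ENNReal.ofReal (levelRadius (‖z‖ ^ 2) t ^ 2) :=
        setLIntegral_mono' measurableSet_Ioi fun t ht => by
          rw [Measure.restrict_apply' measurableSet_ball]
          exact volume_superlevel_le hz ht
    _ = NNReal.pi * ∫⁻ t in Ioi 0, ENNReal.ofReal (levelRadius (‖z‖ ^ 2) t ^ 2) :=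
        lintegral_const_mul' _ _ ENNReal.coe_ne_top
    _ ≤ NNReal.pi * ENNReal.ofReal (4 / 3) := by
        gcongr
        exact lintegral_levelRadius_sq_le (sq_nonneg _) (by nlinarith [norm_nonneg z])

end SingularKernel

/-- For every `z ∈ 𝔻`, `∫_𝔻 (1-|ζ|²)/(|z-ζ||1-ζ̄z|) dA(ζ) ≤ 4/3`. -/
theorem integral_singular_le (z : ℂ) (hz : z ∈ ball (0 : ℂ) 1) :
    (∫⁻ ζ, ENNReal.ofReal ((1 - ‖ζ‖ ^ 2) /
        (‖z - ζ‖ * ‖1 - (starRingEnd ℂ) ζ * z‖)) ∂dA) ≤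
      ENNReal.ofReal (4 / 3) := by
  have hπ : ENNReal.ofReal (1 / π) * NNReal.pi = 1 := by
    rw [← ENNReal.ofReal_coe_nnreal, NNReal.coe_real_pi, ← ENNReal.ofReal_mul (by positivity),
      one_div_mul_cancel pi_ne_zero, ENNReal.ofReal_one]
  rw [dA, lintegral_smul_measure]
  calc ENNReal.ofReal (1 / π) *
        ∫⁻ ζ in ball 0 1, ENNReal.ofReal (SingularKernel.singularKernel z ζ)
      ≤ ENNReal.ofReal (1 / π) * (NNReal.pi * ENNReal.ofReal (4 / 3)) := by
        gcongr
        exact SingularKernel.setLIntegral_ball_singularKernel_le (mem_ball_zero_iff.mp hz)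
    _ = ENNReal.ofReal (4 / 3) := by rw [← mul_assoc, hπ, one_mul]
end

section
/- For every z ∈ 𝔻, ∫_𝔻 log|(1−conj(ζ)z)/(z−ζ)|² dA(ζ) = 1 − |z|². -/
/-!
The integrand `G(z, ζ) = log |(1 - ζ̄z)/(z - ζ)|²` is nonnegative on the disk, since
`|1 - ζ̄z|² - |z - ζ|² = (1 - |z|²)(1 - |ζ|²)`, so its area integral may be computed in polar
coordinates by Tonelli's theorem, circle by circle. On a circle `|ζ| = r ≠ |z|` we have
`G = 2 log |1 - ζz̄| - 2 log |ζ - z|`: the first term is harmonic on the closed disk of radius `r`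
and has mean `0`, the second has mean `2 log max(r, |z|)`. Hence
`∫_𝔻 G dA = -4 ∫₀¹ r log max(r, |z|) dr = 1 - |z|²`.
-/

open MeasureTheory Complex Metric

open Set
open scoped Real ENNReal
open Real (circleAverage)

theorem setLIntegral_ball_eq_lintegral_circleMap {g : ℂ → ℝ≥0∞} (hg : Measurable g) (R : ℝ) :
    ∫⁻ ζ in ball 0 R, g ζ =
      ∫⁻ r in Ioo 0 R, ENNReal.ofReal r * ∫⁻ θ in Ioo (-π) π, g (circleMap 0 r θ) := by
  have hpolar (p : ℝ × ℝ) : Complex.polarCoord.symm p = circleMap 0 p.1 p.2 := by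
    simp [circleMap, Complex.exp_mul_I]
  have hind : EqOn
      (fun p : ℝ × ℝ => ENNReal.ofReal p.1 • (ball 0 R).indicator g (Complex.polarCoord.symm p))
      ((Ioo 0 R ×ˢ univ).indicator fun p => ENNReal.ofReal p.1 * g (circleMap 0 p.1 p.2))
      polarCoord.target := by
    rintro ⟨r, θ⟩ ⟨hr : 0 < r, -⟩
    simp only [hpolar, indicator, mem_ball, dist_zero_right, norm_circleMap_zero, abs_of_pos hr,
      mem_prod, mem_Ioo, hr, true_and, mem_univ, and_true, smul_eq_mul]
    split_ifs <;> simp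
  rw [← lintegral_indicator measurableSet_ball, ← Complex.lintegral_comp_polarCoord_symm,
    setLIntegral_congr_fun polarCoord.open_target.measurableSet hind,
    setLIntegral_indicator (measurableSet_Ioo.prod MeasurableSet.univ), polarCoord_target,
    prod_inter_prod, univ_inter, inter_eq_left.2 Ioo_subset_Ioi_self, Measure.volume_eq_prod,
    ← Measure.prod_restrict, lintegral_prod _ (by fun_prop)]
  simp_rw [lintegral_const_mul' _ _ ENNReal.ofReal_ne_top]

theorem setLIntegral_ofReal_circleMap_eq_circleAverage {f : ℂ → ℝ} {r : ℝ}
    (hf : ∀ ζ ∈ sphere 0 |r|, 0 ≤ f ζ) (hci : CircleIntegrable f 0 r) :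
    ∫⁻ θ in Ioo (-π) π, ENNReal.ofReal (f (circleMap 0 r θ)) =
      ENNReal.ofReal (2 * π * circleAverage f 0 r) := by
  have hper : Function.Periodic (fun θ => f (circleMap 0 r θ)) (2 * π) :=
    (periodic_circleMap 0 r).comp f
  have hshift :
      ∫ θ in (0 : ℝ)..2 * π, f (circleMap 0 r θ) = ∫ θ in -π..π, f (circleMap 0 r θ) := by
    have := hper.intervalIntegral_add_eq 0 (-π)
    rwa [zero_add, neg_add_eq_sub, two_mul, add_sub_cancel_right, ← two_mul] at this
  have hint : IntervalIntegrable (fun θ => f (circleMap 0 r θ)) volume (-π) π :=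
    hper.intervalIntegrable₀ Real.two_pi_pos.ne' hci _ _
  rw [Real.circleAverage_def, smul_eq_mul, ← mul_assoc, mul_inv_cancel₀ Real.two_pi_pos.ne',
    one_mul, hshift, intervalIntegral.integral_of_le (by linarith [Real.pi_pos]),
    integral_Ioc_eq_integral_Ioo, ofReal_integral_eq_lintegral_ofReal]
  · exact hint.1.mono_set Ioo_subset_Ioc_self
  · exact (ae_restrict_iff' measurableSet_Ioo).2
      (ae_of_all _ fun θ _ => hf _ (circleMap_mem_sphere' 0 r θ))

theorem setIntegral_ball_eq_integral_mul_circleAverage {f : ℂ → ℝ} {R : ℝ} (hfm : Measurable f)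
    (hf : ∀ ζ ∈ ball 0 R, 0 ≤ f ζ)
    (hci : ∀ᵐ r ∂volume.restrict (Ioo 0 R), CircleIntegrable f 0 r)
    (hint : IntegrableOn (fun r => r * circleAverage f 0 r) (Ioo 0 R)) :
    ∫ ζ in ball 0 R, f ζ = 2 * π * ∫ r in Ioo 0 R, r * circleAverage f 0 r := by
  have hsphere : ∀ r ∈ Ioo 0 R, ∀ ζ ∈ sphere (0 : ℂ) |r|, 0 ≤ f ζ := fun r hr ζ hζ =>
    hf ζ (sphere_subset_ball ((abs_of_pos hr.1).trans_lt hr.2) hζ)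
  have hradial : 0 ≤ᵐ[volume.restrict (Ioo 0 R)] fun r => 2 * π * (r * circleAverage f 0 r) :=
    (ae_restrict_iff' measurableSet_Ioo).2 (ae_of_all _ fun r hr => mul_nonneg (by positivity)
      (mul_nonneg hr.1.le (Real.circleAverage_nonneg_of_nonneg (hsphere r hr))))
  have hlint : ∫⁻ ζ in ball 0 R, ENNReal.ofReal (f ζ) =
      ∫⁻ r in Ioo 0 R, ENNReal.ofReal (2 * π * (r * circleAverage f 0 r)) := by
    rw [setLIntegral_ball_eq_lintegral_circleMap (by fun_prop)]
    refine lintegral_congr_ae ?_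
    filter_upwards [hci, ae_restrict_mem measurableSet_Ioo] with r hr hrR
    rw [setLIntegral_ofReal_circleMap_eq_circleAverage (hsphere r hrR) hr,
      ← ENNReal.ofReal_mul hrR.1.le]
    ring_nf
  rw [integral_eq_lintegral_of_nonneg_ae ((ae_restrict_iff' measurableSet_ball).2 (ae_of_all _ hf))
      hfm.aestronglyMeasurable, hlint,
    ← ofReal_integral_eq_lintegral_ofReal (hint.const_mul _) hradial,
    ENNReal.toReal_ofReal (integral_nonneg_of_ae hradial), integral_const_mul]

theorem circleAverage_const_mul (a : ℝ) (f : ℂ → ℝ) (c : ℂ) (R : ℝ) :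
    circleAverage (fun ζ => a * f ζ) c R = a * circleAverage f c R :=
  Real.circleAverage_fun_smul (a := a) (f := f)

theorem circleIntegrable_log_norm_one_sub_mul (w : ℂ) (r : ℝ) :
    CircleIntegrable (fun ζ => Real.log ‖1 - ζ * w‖) 0 r :=
  MeromorphicOn.circleIntegrable_log_norm (f := fun ζ => 1 - ζ * w) fun _ _ => by fun_prop

theorem circleAverage_log_norm_one_sub_mul {w : ℂ} {r : ℝ} (h : ‖w‖ * |r| < 1) :
    circleAverage (fun ζ => Real.log ‖1 - ζ * w‖) 0 r = 0 := by
  rw [InnerProductSpace.HarmonicOnNhd.circleAverage_eq]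
  · simp
  intro x hx
  refine AnalyticAt.harmonicAt_log_norm (by fun_prop) (sub_ne_zero.2 fun h1 => ?_)
  rw [mem_closedBall, dist_zero_right] at hx
  have : ‖x * w‖ < 1 := by
    rw [norm_mul]
    nlinarith [norm_nonneg x, norm_nonneg w]
  simp [← h1] at this

theorem circleAverage_log_norm_sub_const_eq_log_max {a : ℂ} {r : ℝ} (hr : 0 < r) :
    circleAverage (fun ζ => Real.log ‖ζ - a‖) 0 r = Real.log (max r ‖a‖) := by
  rw [circleAverage_log_norm_sub_const_eq_log_radius_add_posLog hr.ne', zero_sub, norm_neg,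
    Real.posLog_eq_log_max_one (by positivity), ← Real.log_mul hr.ne' (by positivity),
    mul_max_of_nonneg _ _ hr.le, mul_one, mul_inv_cancel_left₀ hr.ne']

theorem integral_mul_log (a b : ℝ) :
    ∫ x in a..b, x * Real.log x =
      b ^ 2 / 2 * Real.log b - b ^ 2 / 4 - (a ^ 2 / 2 * Real.log a - a ^ 2 / 4) := by
  have hF (x : ℝ) :
      x ^ 2 / 2 * Real.log x - x ^ 2 / 4 = x * (x * Real.log x) / 2 - x ^ 2 / 4 := by
    ring
  rw [hF, hF]
  refine integral_eq_of_hasDerivAt_off_countable (fun x => x * (x * Real.log x) / 2 - x ^ 2 / 4) _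
    (countable_singleton 0) (by fun_prop) (fun x hx => ?_)
    (Real.continuous_mul_log.intervalIntegrable a b)
  exact (((hasDerivAt_id x).mul (Real.hasDerivAt_mul_log hx.2)).div_const 2 |>.sub
    ((hasDerivAt_pow 2 x).div_const 4)).congr_deriv (by simp; ring)

theorem intervalIntegrable_mul_log_max {a : ℝ} (ha₀ : 0 ≤ a) (ha₁ : a ≤ 1) :
    IntervalIntegrable (fun r => r * Real.log (max r a)) volume 0 1 := by
  refine IntervalIntegrable.trans (b := a) ?_ ?_
  · refine ((continuous_mul_const (Real.log a)).continuousOn.congr fun r hr => ?_)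
      |>.intervalIntegrable
    rw [max_eq_right (uIcc_of_le ha₀ ▸ hr).2]
  · refine (Real.continuous_mul_log.continuousOn.congr fun r hr => ?_).intervalIntegrable
    rw [max_eq_left (uIcc_of_le ha₁ ▸ hr).1]

theorem integral_mul_log_max {a : ℝ} (ha₀ : 0 ≤ a) (ha₁ : a ≤ 1) :
    ∫ r in (0 : ℝ)..1, r * Real.log (max r a) = (a ^ 2 - 1) / 4 := by
  have hint := intervalIntegrable_mul_log_max ha₀ ha₁
  rw [← intervalIntegral.integral_add_adjacent_intervals (b := a)
      (hint.mono_set (uIcc_subset_uIcc_left (by simp [ha₀, ha₁])))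
      (hint.mono_set (uIcc_subset_uIcc_right (by simp [ha₀, ha₁]))),
    intervalIntegral.integral_congr (a := 0) (b := a) (g := fun r => r * Real.log a)
      fun r hr => by simp [max_eq_right (uIcc_of_le ha₀ ▸ hr).2],
    intervalIntegral.integral_congr (a := a) (b := 1) (g := fun r => r * Real.log r)
      fun r hr => by simp [max_eq_left (uIcc_of_le ha₁ ▸ hr).1],
    intervalIntegral.integral_mul_const, integral_id, integral_mul_log]
  simp
  ring

theorem norm_one_sub_conj_mul_sq_sub_norm_sub_sq (z ζ : ℂ) :
    ‖1 - (starRingEnd ℂ) ζ * z‖ ^ 2 - ‖z - ζ‖ ^ 2 = (1 - ‖z‖ ^ 2) * (1 - ‖ζ‖ ^ 2) := by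
  simp only [Complex.sq_norm, Complex.normSq_apply, Complex.sub_re, Complex.one_re,
    Complex.mul_re, Complex.conj_re, Complex.conj_im, Complex.sub_im, Complex.one_im,
    Complex.mul_im]
  ring

noncomputable def laplaceGreen (z ζ : ℂ) : ℝ :=
  Real.log (‖(1 - (starRingEnd ℂ) ζ * z) / (z - ζ)‖ ^ 2)

theorem measurable_laplaceGreen (z : ℂ) : Measurable (laplaceGreen z) := by
  unfold laplaceGreen
  fun_prop

theorem laplaceGreen_nonneg {z ζ : ℂ} (hz : ‖z‖ ≤ 1) (hζ : ‖ζ‖ ≤ 1) : 0 ≤ laplaceGreen z ζ := by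
  rcases eq_or_ne z ζ with rfl | hne
  · simp [laplaceGreen]
  have hpos : 0 < ‖z - ζ‖ ^ 2 := by positivity [sub_ne_zero.2 hne]
  refine Real.log_nonneg ?_
  rw [norm_div, div_pow, one_le_div hpos]
  nlinarith [norm_one_sub_conj_mul_sq_sub_norm_sub_sq z ζ,
    mul_nonneg (sub_nonneg.2 (pow_le_one₀ (n := 2) (norm_nonneg z) hz))
      (sub_nonneg.2 (pow_le_one₀ (n := 2) (norm_nonneg ζ) hζ))]

theorem laplaceGreen_eq {z ζ : ℂ} (hne : ζ ≠ z) (h : ‖ζ‖ * ‖z‖ < 1) :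
    laplaceGreen z ζ = 2 * (Real.log ‖1 - ζ * (starRingEnd ℂ) z‖ - Real.log ‖ζ - z‖) := by
  have hconj : ‖1 - (starRingEnd ℂ) ζ * z‖ = ‖1 - ζ * (starRingEnd ℂ) z‖ := by
    rw [← Complex.norm_conj (1 - ζ * _), map_sub, map_one, map_mul, Complex.conj_conj, mul_comm]
  have hA : 1 - ζ * (starRingEnd ℂ) z ≠ 0 := by
    refine sub_ne_zero.2 fun h1 => h.ne ?_
    simpa using congrArg norm h1.symm
  rw [laplaceGreen, norm_div, div_pow, Real.log_div (by simpa [hconj] using hA)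
    (by simpa [sub_eq_zero] using hne.symm), Real.log_pow, Real.log_pow, hconj, norm_sub_rev z ζ]
  push_cast
  ring

theorem laplaceGreen_eqOn_sphere {z : ℂ} {r : ℝ} (hz : ‖z‖ < 1) (hr : |r| ≤ 1)
    (hrz : |r| ≠ ‖z‖) :
    EqOn (laplaceGreen z)
      (fun ζ => 2 * (Real.log ‖1 - ζ * (starRingEnd ℂ) z‖ - Real.log ‖ζ - z‖))
      (sphere 0 |r|) := by
  intro ζ hζ
  rw [mem_sphere_zero_iff_norm] at hζ
  refine laplaceGreen_eq (fun h => hrz (hζ ▸ h ▸ rfl)) ?_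
  rw [hζ]
  nlinarith [norm_nonneg z, abs_nonneg r]

theorem circleIntegrable_laplaceGreen {z : ℂ} {r : ℝ} (hz : ‖z‖ < 1) (hr : |r| ≤ 1)
    (hrz : |r| ≠ ‖z‖) : CircleIntegrable (laplaceGreen z) 0 r := by
  rw [circleIntegrable_congr (laplaceGreen_eqOn_sphere hz hr hrz)]
  exact ((circleIntegrable_log_norm_one_sub_mul _ r).sub
    (circleIntegrable_log_norm_sub_const r)).const_mul 2

theorem circleAverage_laplaceGreen {z : ℂ} {r : ℝ} (hz : ‖z‖ < 1) (hr₀ : 0 < r) (hr₁ : r ≤ 1)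
    (hrz : r ≠ ‖z‖) : circleAverage (laplaceGreen z) 0 r = -2 * Real.log (max r ‖z‖) := by
  have habs : |r| = r := abs_of_pos hr₀
  have hw : ‖(starRingEnd ℂ) z‖ * |r| < 1 := by
    rw [Complex.norm_conj, habs]
    nlinarith [norm_nonneg z]
  rw [Real.circleAverage_congr_sphere
      (laplaceGreen_eqOn_sphere hz (by rwa [habs]) (by rwa [habs])),
    circleAverage_const_mul,
    Real.circleAverage_fun_sub (circleIntegrable_log_norm_one_sub_mul _ r)
      (circleIntegrable_log_norm_sub_const r), circleAverage_log_norm_one_sub_mul hw,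
    circleAverage_log_norm_sub_const_eq_log_max hr₀]
  ring

/-- For every `z ∈ 𝔻`, `∫_𝔻 log|(1-ζ̄z)/(z-ζ)|² dA(ζ) = 1 - |z|²`. -/
theorem integral_log_eq (z : ℂ) (hz : z ∈ ball (0 : ℂ) 1) :
    (∫ ζ, Real.log (‖(1 - (starRingEnd ℂ) ζ * z) / (z - ζ)‖ ^ 2) ∂dA) =
      1 - ‖z‖ ^ 2 := by
  have hz₁ : ‖z‖ < 1 := mem_ball_zero_iff.1 hz
  have hgood : ∀ᵐ r ∂volume.restrict (Ioo (0 : ℝ) 1), r ∈ Ioo 0 1 ∧ r ≠ ‖z‖ :=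
    (ae_restrict_mem measurableSet_Ioo).and (ae_restrict_of_ae (Measure.ae_ne volume _))
  have hci : ∀ᵐ r ∂volume.restrict (Ioo (0 : ℝ) 1), CircleIntegrable (laplaceGreen z) 0 r :=
    hgood.mono fun r ⟨⟨hr₀, hr₁⟩, hrz⟩ => circleIntegrable_laplaceGreen hz₁
      ((abs_of_pos hr₀).trans_le hr₁.le) ((abs_of_pos hr₀).trans_ne hrz)
  have hradial : (fun r => r * circleAverage (laplaceGreen z) 0 r)
      =ᵐ[volume.restrict (Ioo (0 : ℝ) 1)] fun r => -2 * (r * Real.log (max r ‖z‖)) :=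
    hgood.mono fun r ⟨⟨hr₀, hr₁⟩, hrz⟩ => by
      simp only [circleAverage_laplaceGreen hz₁ hr₀ hr₁.le hrz]
      ring
  have hint : IntegrableOn (fun r => r * Real.log (max r ‖z‖)) (Ioo 0 1) :=
    (intervalIntegrable_mul_log_max (norm_nonneg z) hz₁.le).1.mono_set Ioo_subset_Ioc_self
  have hball := setIntegral_ball_eq_integral_mul_circleAverage (measurable_laplaceGreen z)
    (fun ζ hζ => laplaceGreen_nonneg hz₁.le (mem_ball_zero_iff.1 hζ).le) hci
    ((hint.const_mul (-2)).congr hradial.symm)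
  rw [integral_congr_ae hradial, integral_const_mul, ← integral_Ioc_eq_integral_Ioo,
    ← intervalIntegral.integral_of_le zero_le_one,
    integral_mul_log_max (norm_nonneg z) hz₁.le] at hball
  rw [dA, integral_smul_measure, ENNReal.toReal_ofReal (by positivity)]
  change _ • ∫ ζ in ball 0 1, laplaceGreen z ζ = _
  rw [hball, smul_eq_mul]
  field_simp
  ring
end
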